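/- There is a well-defined group homomorphism from F_n to (Z/2)^{(n choose 2)} (indexed by unordered pairs {a,b} ⊂ {1,...,n}) sending each generator τ_i to 0 and each ζ_i, occurring at a given position in a word, to the indicator of the pair of strands crossing at that position. Concretely: the map counting, for each word w in the generators and each unordered pair {a,b}, the parity of the number of ζ-letters at which strands a and b cross (strand labels traced via the permutation action where both ζ_i and τ_i act as the transposition (i,i+1)), descends to a well-defined function on F_n. -/

import Mathlib

set_option maxHeartbeats 1000000

namespace OneTermBracket

/-- Letters (generators) of free braid words on `n` strands:
`zeta i` is a classical crossing, `tau i` a virtual crossing, `1 ≤ i+1 ≤ n-1`. -/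
inductive Letter (n : ℕ) where
  | zeta (i : Fin (n-1))
  | tau  (i : Fin (n-1))
deriving DecidableEq

namespace Letter

def idx {n : ℕ} : Letter n → Fin (n-1)
  | zeta i => i
  | tau i => i

def isZeta {n : ℕ} : Letter n → Bool
  | zeta _ => true
  | tau _ => false

end Letter

def lo {n : ℕ} (i : Fin (n-1)) : Fin n := ⟨i.1, by have := i.2; omega⟩
def hi {n : ℕ} (i : Fin (n-1)) : Fin n := ⟨i.1 + 1, by have := i.2; omega⟩

/-- The transposition `(i, i+1)` of `{1, …, n}`. -/
def sPerm {n : ℕ} (i : Fin (n-1)) : Equiv.Perm (Fin n) := Equiv.swap (lo i) (hi i)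

/-- Each letter acts on positions as the transposition `(i, i+1)`. -/
def transOf {n : ℕ} (g : Letter n) : Equiv.Perm (Fin n) := sPerm g.idx

/-- The permutation realized by the prefix of length `j` of a braid word,
mapping the top label of a strand to its position at level `j`. -/
def prefPerm {n : ℕ} (w : List (Letter n)) (j : ℕ) : Equiv.Perm (Fin n) :=
  (((w.take j).map transOf).reverse).prod

/-- The permutation `P(β)` of a braid word (top endpoint `k` goes to bottom endpoint `P k`). -/
def permOf {n : ℕ} (w : List (Letter n)) : Equiv.Perm (Fin n) :=
  ((w.map transOf).reverse).prod

/-- The unordered pair of (top labels of the) strands crossing at position `j` of `w`. -/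
def strandsAt {n : ℕ} (w : List (Letter n)) (j : ℕ) : Option (Sym2 (Fin n)) :=
  (w[j]?).map fun g => s((prefPerm w j)⁻¹ (lo g.idx), (prefPerm w j)⁻¹ (hi g.idx))

/-- Component-wise parity determined by a partition `{1,…,n} = N₁ ⊔ N₂` (encoded by
`c : Fin n → Bool`): a classical crossing is odd (`1`) iff its two strands lie in
different parts. Non-classical positions get `0`. -/
def cwParity {n : ℕ} (c : Fin n → Bool) (w : List (Letter n)) (j : ℕ) : ZMod 2 :=
  match w[j]? with
  | some (.zeta i) =>
      if c ((prefPerm w j)⁻¹ (lo i)) = c ((prefPerm w j)⁻¹ (hi i)) then 0 else 1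
  | _ => 0

/-- The defining relations of `F_n` and `FB_n` which do not involve
`ζ_i² = 1` or the classical third Reidemeister move ("strong" moves). -/
inductive RelStrong (n : ℕ) : List (Letter n) → List (Letter n) → Prop
  | tt (i : Fin (n-1)) : RelStrong n [.tau i, .tau i] []
  | virt (i : Fin (n-1)) : RelStrong n [.zeta i, .tau i] [.tau i, .zeta i]
  | far_zz (i j : Fin (n-1)) (h : 2 ≤ Nat.dist i j) :
      RelStrong n [.zeta i, .zeta j] [.zeta j, .zeta i]
  | far_zt (i j : Fin (n-1)) (h : 2 ≤ Nat.dist i j) :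
      RelStrong n [.zeta i, .tau j] [.tau j, .zeta i]
  | far_tt (i j : Fin (n-1)) (h : 2 ≤ Nat.dist i j) :
      RelStrong n [.tau i, .tau j] [.tau j, .tau i]
  | r3v (i j : Fin (n-1)) (h : (j:ℕ) = (i:ℕ) + 1) :
      RelStrong n [.tau i, .tau j, .tau i] [.tau j, .tau i, .tau j]
  | semi (i j : Fin (n-1)) (h : (j:ℕ) = (i:ℕ) + 1) :
      RelStrong n [.tau i, .tau j, .zeta i] [.zeta j, .tau i, .tau j]

/-- The defining relations of `F_n`. -/
inductive RelF (n : ℕ) : List (Letter n) → List (Letter n) → Prop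
  | strong {r1 r2} : RelStrong n r1 r2 → RelF n r1 r2
  | zz (i : Fin (n-1)) : RelF n [.zeta i, .zeta i] []

/-- The defining relations of the free braid group `FB_n`. -/
inductive RelFB (n : ℕ) : List (Letter n) → List (Letter n) → Prop
  | ofF {r1 r2} : RelF n r1 r2 → RelFB n r1 r2
  | r3c (i j : Fin (n-1)) (h : (j:ℕ) = (i:ℕ) + 1) :
      RelFB n [.zeta i, .zeta j, .zeta i] [.zeta j, .zeta i, .zeta j]

/-- One application of a relation from `R` inside a word. -/
def StepOf {n : ℕ} (R : List (Letter n) → List (Letter n) → Prop)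
    (w1 w2 : List (Letter n)) : Prop :=
  ∃ A B r1 r2, R r1 r2 ∧ w1 = A ++ r1 ++ B ∧ w2 = A ++ r2 ++ B

/-- Strong equivalence: all moves of `F_n` except `ζ_i² = 1`. -/
def StrongEq {n : ℕ} (w1 w2 : List (Letter n)) : Prop :=
  Relation.EqvGen (StepOf (RelStrong n)) w1 w2

/-- Equivalence of braid words as elements of `F_n`. -/
def EqF {n : ℕ} (w1 w2 : List (Letter n)) : Prop :=
  Relation.EqvGen (StepOf (RelF n)) w1 w2

/-- Equivalence of braid words as elements of the free braid group `FB_n`. -/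
def EqFB {n : ℕ} (w1 w2 : List (Letter n)) : Prop :=
  Relation.EqvGen (StepOf (RelFB n)) w1 w2

/-- The parity axioms, for a parity `P` defined on the class `C` of braid words.
`P w j` is the parity of the crossing at position `j` of `w` (only classical
positions matter). -/
structure IsParity {n : ℕ} (C : List (Letter n) → Prop)
    (P : List (Letter n) → ℕ → ZMod 2) : Prop where
  /-- Crossings not taking part in a relation keep their parity (part before). -/
  untouched_left : ∀ A B r1 r2, RelFB n r1 r2 →
    C (A ++ r1 ++ B) → C (A ++ r2 ++ B) → ∀ j < A.length,
    P (A ++ r1 ++ B) j = P (A ++ r2 ++ B) j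
  /-- Crossings not taking part in a relation keep their parity (part after). -/
  untouched_right : ∀ A B r1 r2, RelFB n r1 r2 →
    C (A ++ r1 ++ B) → C (A ++ r2 ++ B) → ∀ j < B.length,
    P (A ++ r1 ++ B) (A.length + r1.length + j) = P (A ++ r2 ++ B) (A.length + r2.length + j)
  /-- In commutation-type relations (far commutativity, virtualization), the two
  letters keep their parities. -/
  comm : ∀ A B x y, RelFB n [x, y] [y, x] →
    C (A ++ [x, y] ++ B) → C (A ++ [y, x] ++ B) →
    P (A ++ [x, y] ++ B) A.length = P (A ++ [y, x] ++ B) (A.length + 1) ∧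
    P (A ++ [x, y] ++ B) (A.length + 1) = P (A ++ [y, x] ++ B) A.length
  /-- In a classical second Reidemeister move both crossings have the same parity. -/
  r2c : ∀ A B (i : Fin (n-1)),
    C (A ++ [.zeta i, .zeta i] ++ B) → C (A ++ B) →
    P (A ++ [.zeta i, .zeta i] ++ B) A.length
      = P (A ++ [.zeta i, .zeta i] ++ B) (A.length + 1)
  /-- In a semivirtual move, the classical crossing keeps its parity. -/
  semiv : ∀ A B (i j : Fin (n-1)), (j:ℕ) = (i:ℕ) + 1 →
    C (A ++ [.tau i, .tau j, .zeta i] ++ B) →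
    C (A ++ [.zeta j, .tau i, .tau j] ++ B) →
    P (A ++ [.tau i, .tau j, .zeta i] ++ B) (A.length + 2)
      = P (A ++ [.zeta j, .tau i, .tau j] ++ B) A.length
  /-- In a classical third Reidemeister move the number of odd crossings is even. -/
  r3_even : ∀ A B (i j : Fin (n-1)), (j:ℕ) = (i:ℕ) + 1 →
    C (A ++ [.zeta i, .zeta j, .zeta i] ++ B) →
    C (A ++ [.zeta j, .zeta i, .zeta j] ++ B) →
    P (A ++ [.zeta i, .zeta j, .zeta i] ++ B) A.length
      + P (A ++ [.zeta i, .zeta j, .zeta i] ++ B) (A.length + 1)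
      + P (A ++ [.zeta i, .zeta j, .zeta i] ++ B) (A.length + 2) = 0
  /-- In a classical third Reidemeister move, upper/middle/lower crossings on the
  left correspond to lower/middle/upper crossings on the right with equal parities. -/
  r3_corr : ∀ A B (i j : Fin (n-1)), (j:ℕ) = (i:ℕ) + 1 →
    C (A ++ [.zeta i, .zeta j, .zeta i] ++ B) →
    C (A ++ [.zeta j, .zeta i, .zeta j] ++ B) →
    P (A ++ [.zeta i, .zeta j, .zeta i] ++ B) A.length
      = P (A ++ [.zeta j, .zeta i, .zeta j] ++ B) (A.length + 2) ∧
    P (A ++ [.zeta i, .zeta j, .zeta i] ++ B) (A.length + 1)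
      = P (A ++ [.zeta j, .zeta i, .zeta j] ++ B) (A.length + 1) ∧
    P (A ++ [.zeta i, .zeta j, .zeta i] ++ B) (A.length + 2)
      = P (A ++ [.zeta j, .zeta i, .zeta j] ++ B) A.length

/-- Delete from `w` all classical letters whose parity (given by `par`) is even. -/
def deleteEven {n : ℕ} (w : List (Letter n)) (par : ℕ → ZMod 2) : List (Letter n) :=
  (List.range w.length).filterMap fun j =>
    (w[j]?).bind fun g =>
      match g with
      | .zeta i => if par j = 0 then none else some (.zeta i)
      | .tau i => some (.tau i)

/-- The one-term parity bracket: delete all even classical crossings. -/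
def bracket {n : ℕ} (P : List (Letter n) → ℕ → ZMod 2) (w : List (Letter n)) :
    List (Letter n) :=
  deleteEven w (P w)

/-- Positions of classical crossings of a word. -/
def ZetaPos {n : ℕ} (w : List (Letter n)) : Set ℕ :=
  {j | ∃ i, w[j]? = some (Letter.zeta i)}

/-- The classical crossings at positions `j1 < j2` form a bigon: they lie on the same
pair of strands, and no classical crossing between them lies on either of those strands. -/
def IsBigon {n : ℕ} (w : List (Letter n)) (j1 j2 : ℕ) : Prop :=
  j1 < j2 ∧ j1 ∈ ZetaPos w ∧ j2 ∈ ZetaPos w ∧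
  strandsAt w j1 = strandsAt w j2 ∧
  ∀ k, j1 < k → k < j2 → k ∈ ZetaPos w →
    ∀ e e', strandsAt w j1 = some e → strandsAt w k = some e' → ∀ a ∈ e, a ∉ e'

/-- Delete the letters at two given positions. -/
def delete2 {n : ℕ} (w : List (Letter n)) (j1 j2 : ℕ) : List (Letter n) :=
  (w.eraseIdx (max j1 j2)).eraseIdx (min j1 j2)

/-- One bigon reduction. -/
def BigonStep {n : ℕ} (w w' : List (Letter n)) : Prop :=
  ∃ j1 j2, IsBigon w j1 j2 ∧ w' = delete2 w j1 j2

/-- A word is irreducible if it admits no bigon reduction. -/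
def Irreducible {n : ℕ} (w : List (Letter n)) : Prop := ¬ ∃ j1 j2, IsBigon w j1 j2

/-- Number of classical letters of a word. -/
def countZeta {n : ℕ} (w : List (Letter n)) : ℕ := (w.filter Letter.isZeta).length

/-- `φ` is an isomorphism of the decorated graphs `Γ(w1) ≅ Γ(w2)`, encoded
combinatorially: a bijection of classical crossings preserving the pair of strands
through each crossing, the order of crossings along each strand, and the endpoint
structure (the permutation). -/
structure IsGammaIso {n : ℕ} (w1 w2 : List (Letter n)) (φ : ℕ → ℕ) : Prop where
  maps : ∀ j ∈ ZetaPos w1, φ j ∈ ZetaPos w2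
  inj : ∀ j ∈ ZetaPos w1, ∀ j' ∈ ZetaPos w1, φ j = φ j' → j = j'
  surj : ∀ k ∈ ZetaPos w2, ∃ j ∈ ZetaPos w1, φ j = k
  strands : ∀ j ∈ ZetaPos w1, strandsAt w2 (φ j) = strandsAt w1 j
  order : ∀ j ∈ ZetaPos w1, ∀ j' ∈ ZetaPos w1, j < j' →
    (∃ e e' a, strandsAt w1 j = some e ∧ strandsAt w1 j' = some e' ∧ a ∈ e ∧ a ∈ e') →
    φ j < φ j'
  perm : permOf w1 = permOf w2

/-! ### The groups `F_n` and `FB_n` as presented groups -/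

/-- Generators: `Sum.inl i` is the classical generator `ζ_i`,
`Sum.inr i` is the virtual generator `τ_i`. -/
abbrev GGen (n : ℕ) := Fin (n-1) ⊕ Fin (n-1)

def zg {n : ℕ} (i : Fin (n-1)) : FreeGroup (GGen n) := FreeGroup.of (Sum.inl i)
def tg {n : ℕ} (i : Fin (n-1)) : FreeGroup (GGen n) := FreeGroup.of (Sum.inr i)

/-- The relators of `F_n`. -/
def FRels (n : ℕ) : Set (FreeGroup (GGen n)) :=
  (⋃ i, {zg i * zg i}) ∪ (⋃ i, {tg i * tg i}) ∪
  (⋃ i, {zg i * tg i * (tg i * zg i)⁻¹}) ∪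
  (⋃ (i : Fin (n-1)) (j : Fin (n-1)) (_ : 2 ≤ Nat.dist i j),
    {zg i * zg j * (zg j * zg i)⁻¹, zg i * tg j * (tg j * zg i)⁻¹,
     tg i * tg j * (tg j * tg i)⁻¹}) ∪
  (⋃ (i : Fin (n-1)) (j : Fin (n-1)) (_ : (j:ℕ) = (i:ℕ) + 1),
    {tg i * tg j * tg i * (tg j * tg i * tg j)⁻¹,
     tg i * tg j * zg i * (zg j * tg i * tg j)⁻¹})

/-- The relators of `FB_n`: those of `F_n` together with the classical third
Reidemeister relation. -/
def FBRels (n : ℕ) : Set (FreeGroup (GGen n)) :=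
  FRels n ∪
  (⋃ (i : Fin (n-1)) (j : Fin (n-1)) (_ : (j:ℕ) = (i:ℕ) + 1),
    {zg i * zg j * zg i * (zg j * zg i * zg j)⁻¹})

/-- The group `F_n`. -/
abbrev FGrp (n : ℕ) := PresentedGroup (FRels n)

/-- The free braid group `FB_n`. -/
abbrev FBGrp (n : ℕ) := PresentedGroup (FBRels n)

def zF {n : ℕ} (i : Fin (n-1)) : FGrp n := PresentedGroup.of (Sum.inl i)
def tF {n : ℕ} (i : Fin (n-1)) : FGrp n := PresentedGroup.of (Sum.inr i)

/-- Evaluation of a braid word in `F_n`. -/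
def evalF {n : ℕ} (w : List (Letter n)) : FGrp n :=
  (w.map fun g => match g with
    | Letter.zeta i => zF i
    | Letter.tau i => tF i).prod

/-- For each unordered pair of strands, the mod-2 number of classical letters of `w`
at which these two strands cross (strand labels traced from the top). -/
def crossPar {n : ℕ} : List (Letter n) → Sym2 (Fin n) → ZMod 2
  | [], _ => 0
  | g :: rest, e =>
    (match g with
     | Letter.zeta i => if e = s(lo i, hi i) then (1 : ZMod 2) else 0
     | Letter.tau _ => 0) + crossPar rest (e.map (transOf g))

/-! ### Chord diagrams and the Gaussian parity -/

/-- The setoid on strands given by `SameCycle`; its classes are the orbits of `σ`,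
i.e. the components of the closure. -/
def sameCycleSetoid {n : ℕ} (σ : Equiv.Perm (Fin n)) : Setoid (Fin n) :=
  ⟨σ.SameCycle, ⟨Equiv.Perm.SameCycle.refl σ, Equiv.Perm.SameCycle.symm,
    Equiv.Perm.SameCycle.trans⟩⟩

/-- The rank of a strand in the single cycle of `σ` starting from strand `0`. -/
noncomputable def rankIn {n : ℕ} [NeZero n] (σ : Equiv.Perm (Fin n)) (a : Fin n) : ℕ :=
  ((Function.invFun (fun k : Fin n => (σ ^ (k : ℕ)) 0) a : Fin n) : ℕ)

/-- Coordinates on the core circle of the two endpoints of the chord of the classical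
crossing at position `j` (the circle traverses the strands in the cyclic order of `σ`). -/
noncomputable def chordEnds {n : ℕ} [NeZero n] (w : List (Letter n))
    (σ : Equiv.Perm (Fin n)) (j : ℕ) : ℕ × ℕ :=
  match w[j]? with
  | some (Letter.zeta i) =>
      (rankIn σ ((prefPerm w j)⁻¹ (lo i)) * w.length + j,
       rankIn σ ((prefPerm w j)⁻¹ (hi i)) * w.length + j)
  | _ => (0, 0)

/-- Two chords are linked iff the endpoints of one separate the endpoints of the
other on the core circle. -/
def LinkedChords {n : ℕ} [NeZero n] (w : List (Letter n)) (σ : Equiv.Perm (Fin n))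
    (j k : ℕ) : Prop :=
  Xor' (min (chordEnds w σ j).1 (chordEnds w σ j).2 < (chordEnds w σ k).1 ∧
        (chordEnds w σ k).1 < max (chordEnds w σ j).1 (chordEnds w σ j).2)
       (min (chordEnds w σ j).1 (chordEnds w σ j).2 < (chordEnds w σ k).2 ∧
        (chordEnds w σ k).2 < max (chordEnds w σ j).1 (chordEnds w σ j).2)

/-- The Gaussian parity of the classical crossing at position `j`: the mod-2 number
of chords linked with its chord. Even (`0`) iff linked with evenly many chords. -/
noncomputable def gaussParity {n : ℕ} [NeZero n] (w : List (Letter n))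
    (σ : Equiv.Perm (Fin n)) (j : ℕ) : ZMod 2 :=
  (Nat.card {k : ℕ // k < w.length ∧ k ∈ ZetaPos w ∧ k ≠ j ∧ LinkedChords w σ j k} : ZMod 2)

/-! Let each letter `g` act on pairs `(e, t)`, an unordered pair of strands and a parity, by
`(e, t) ↦ (s_g e, t + [g = ζ_i ∧ e = {i, i+1}])`. These maps are involutions satisfying the
defining relations of `F_n`; the only non-routine one is the semivirtual relation, where
`τ_i τ_{i+1}` carries the pair `{i+1, i+2}` to `{i, i+1}`, so that `ζ_i` after it and `ζ_{i+1}`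
before it contribute to the same pair. Hence `F_n` acts, and a word acting on `(e, 0)` returns
the crossing parity of `e` as second coordinate. -/

lemma sPerm_involutive {n : ℕ} (i : Fin (n-1)) : Function.Involutive (sPerm (n := n) i) :=
  Equiv.swap_apply_self _ _

lemma sPerm_commute {n : ℕ} {i j : Fin (n-1)} (h : i = j ∨ 2 ≤ Nat.dist i j) :
    Commute (sPerm (n := n) i) (sPerm j) := by
  rcases h with rfl | h
  · exact Commute.refl _
  · unfold Nat.dist at h
    refine Equiv.ext fun x => ?_
    simp only [Equiv.Perm.coe_mul, Function.comp_apply, sPerm, Equiv.swap_apply_def,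
      lo, hi, Fin.ext_iff]
    split_ifs <;> dsimp only at * <;> omega

lemma sPerm_braid {n : ℕ} {i j : Fin (n-1)} (h : (j : ℕ) = i + 1) :
    sPerm (n := n) i * sPerm j * sPerm i = sPerm j * sPerm i * sPerm j := by
  refine Equiv.ext fun x => ?_
  simp only [Equiv.Perm.coe_mul, Function.comp_apply, sPerm, Equiv.swap_apply_def,
    lo, hi, Fin.ext_iff]
  split_ifs <;> dsimp only at * <;> omega

lemma sym2_map_map_perm {α : Type*} (σ τ : Equiv.Perm α) (e : Sym2 α) :
    (e.map σ).map τ = e.map ⇑(τ * σ) :=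
  Sym2.map_map e

lemma map_sPerm_braid {n : ℕ} {i j : Fin (n-1)} (h : (j : ℕ) = i + 1) (e : Sym2 (Fin n)) :
    ((e.map (sPerm i)).map (sPerm j)).map (sPerm i)
      = ((e.map (sPerm j)).map (sPerm i)).map (sPerm j) := by
  simp only [sym2_map_map_perm, ← mul_assoc, sPerm_braid h]

lemma sym2_pair_map_sPerm_self {n : ℕ} (i : Fin (n-1)) :
    s(lo i, hi i).map (sPerm (n := n) i) = s(lo i, hi i) := by
  rw [Sym2.map_mk, sPerm, Equiv.swap_apply_left, Equiv.swap_apply_right, Sym2.eq_swap]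

lemma sym2_pair_map_sPerm_of_far {n : ℕ} {i j : Fin (n-1)} (h : 2 ≤ Nat.dist i j) :
    s(lo i, hi i).map (sPerm (n := n) j) = s(lo i, hi i) := by
  unfold Nat.dist at h
  rw [Sym2.map_mk, sPerm, Equiv.swap_apply_of_ne_of_ne, Equiv.swap_apply_of_ne_of_ne] <;>
    simp only [ne_eq, Fin.ext_iff, lo, hi] <;> omega

lemma sym2_pair_map_sPerm_mul_of_adjacent {n : ℕ} {i j : Fin (n-1)} (h : (j : ℕ) = i + 1) :
    s(lo j, hi j).map ⇑(sPerm (n := n) j * sPerm i) = s(lo i, hi i) := by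
  have hlo : (sPerm (n := n) j * sPerm i) (lo j) = lo i := by
    simp only [Equiv.Perm.coe_mul, Function.comp_apply, sPerm, Equiv.swap_apply_def,
      lo, hi, Fin.ext_iff]
    split_ifs <;> dsimp only at * <;> omega
  have hhi : (sPerm (n := n) j * sPerm i) (hi j) = hi i := by
    simp only [Equiv.Perm.coe_mul, Function.comp_apply, sPerm, Equiv.swap_apply_def,
      lo, hi, Fin.ext_iff]
    split_ifs <;> dsimp only at * <;> omega
  rw [Sym2.map_mk, hlo, hhi]

def crossingIndicator {n : ℕ} : Letter n → Sym2 (Fin n) → ZMod 2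
  | .zeta i, e => if e = s(lo i, hi i) then 1 else 0
  | .tau _, _ => 0

@[simp] lemma crossingIndicator_tau {n : ℕ} (i : Fin (n-1)) (e : Sym2 (Fin n)) :
    crossingIndicator (.tau i) e = 0 := rfl

lemma crossPar_cons {n : ℕ} (g : Letter n) (w : List (Letter n)) (e : Sym2 (Fin n)) :
    crossPar (g :: w) e = crossingIndicator g e + crossPar w (e.map (transOf g)) := by
  cases g <;> rfl

lemma crossingIndicator_zeta_map {n : ℕ} {i j : Fin (n-1)} {σ : Equiv.Perm (Fin n)}
    (h : s(lo j, hi j).map σ = s(lo i, hi i)) (e : Sym2 (Fin n)) :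
    crossingIndicator (.zeta i) (e.map σ) = crossingIndicator (.zeta j) e := by
  simp only [crossingIndicator, ← h, (Sym2.map.injective σ.injective).eq_iff]

lemma crossingIndicator_map_sPerm {n : ℕ} (g : Letter n) {j : Fin (n-1)}
    (h : g.idx = j ∨ 2 ≤ Nat.dist g.idx j) (e : Sym2 (Fin n)) :
    crossingIndicator g (e.map (sPerm j)) = crossingIndicator g e := by
  cases g with
  | tau i => rfl
  | zeta i =>
    refine crossingIndicator_zeta_map ?_ e
    rcases h with rfl | h
    · exact sym2_pair_map_sPerm_self _
    · exact sym2_pair_map_sPerm_of_far h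

def letterAction {n : ℕ} (g : Letter n) : Equiv.Perm (Sym2 (Fin n) × ZMod 2) :=
  Function.Involutive.toPerm (fun y => (y.1.map (transOf g), y.2 + crossingIndicator g y.1))
    fun y => by
      refine Prod.ext ?_ ?_
      · simp only [Sym2.map_map, (sPerm_involutive g.idx).comp_self, id_eq, Sym2.map_id',
          transOf]
      · simp only [transOf, crossingIndicator_map_sPerm g (Or.inl rfl), add_assoc,
          CharTwo.add_self_eq_zero, add_zero]

@[simp] lemma letterAction_apply {n : ℕ} (g : Letter n) (y : Sym2 (Fin n) × ZMod 2) :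
    letterAction g y = (y.1.map (transOf g), y.2 + crossingIndicator g y.1) := rfl

lemma letterAction_mul_self {n : ℕ} (g : Letter n) : letterAction g * letterAction g = 1 :=
  Equiv.ext (Function.Involutive.toPerm_involutive _)

lemma letterAction_commute {n : ℕ} {x y : Letter n}
    (h : x.idx = y.idx ∨ 2 ≤ Nat.dist x.idx y.idx) :
    Commute (letterAction x) (letterAction y) := by
  have h' : y.idx = x.idx ∨ 2 ≤ Nat.dist y.idx x.idx := by
    rwa [eq_comm, Nat.dist_comm]
  refine Equiv.ext fun ⟨e, t⟩ => Prod.ext ?_ ?_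
  · simp only [Equiv.Perm.mul_apply, letterAction_apply, transOf, sym2_map_map_perm,
      (sPerm_commute h).eq]
  · simp only [Equiv.Perm.mul_apply, letterAction_apply, transOf,
      crossingIndicator_map_sPerm x h, crossingIndicator_map_sPerm y h', add_right_comm]

lemma letterAction_tau_braid {n : ℕ} {i j : Fin (n-1)} (h : (j : ℕ) = i + 1) :
    letterAction (.tau i) * letterAction (.tau j) * letterAction (.tau i)
      = letterAction (.tau j) * letterAction (.tau i) * letterAction (n := n) (.tau j) := by
  refine Equiv.ext fun ⟨e, t⟩ => Prod.ext ?_ ?_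
  · exact map_sPerm_braid h e
  · rfl

lemma letterAction_semivirtual {n : ℕ} {i j : Fin (n-1)} (h : (j : ℕ) = i + 1) :
    letterAction (.zeta i) * letterAction (.tau j) * letterAction (.tau i)
      = letterAction (.tau j) * letterAction (.tau i) * letterAction (n := n) (.zeta j) := by
  refine Equiv.ext fun ⟨e, t⟩ => Prod.ext ?_ ?_
  · exact map_sPerm_braid h e
  · simp only [Equiv.Perm.mul_apply, letterAction_apply, transOf, Letter.idx,
      sym2_map_map_perm, crossingIndicator_zeta_map (sym2_pair_map_sPerm_mul_of_adjacent h),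
      crossingIndicator_tau, add_zero]

/-- The opposite group makes the first letter of a word act first. -/
def generatorAction {n : ℕ} (x : GGen n) : (Equiv.Perm (Sym2 (Fin n) × ZMod 2))ᵐᵒᵖ :=
  MulOpposite.op (letterAction (Sum.elim Letter.zeta Letter.tau x))

lemma lift_generatorAction_of_mem_FRels {n : ℕ} {r : FreeGroup (GGen n)} (hr : r ∈ FRels n) :
    FreeGroup.lift generatorAction r = 1 := by
  simp only [FRels, Set.mem_union, Set.mem_iUnion, Set.mem_singleton_iff,
    Set.mem_insert_iff] at hr
  rcases hr with ((((⟨i, rfl⟩ | ⟨i, rfl⟩) | ⟨i, rfl⟩) |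
      ⟨i, j, hfar, (rfl | rfl | rfl)⟩) | ⟨i, j, hadj, (rfl | rfl)⟩) <;>
    simp only [zg, tg, map_mul, map_inv, FreeGroup.lift_apply_of, generatorAction,
      Sum.elim_inl, Sum.elim_inr, mul_inv_eq_one, ← MulOpposite.op_mul, MulOpposite.op_inj,
      MulOpposite.op_eq_one_iff]
  · exact letterAction_mul_self _
  · exact letterAction_mul_self _
  · exact (letterAction_commute (x := .tau i) (y := .zeta i) (Or.inl rfl)).eq
  · exact (letterAction_commute (x := .zeta i) (y := .zeta j) (Or.inr hfar)).eq.symm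
  · exact (letterAction_commute (x := .zeta i) (y := .tau j) (Or.inr hfar)).eq.symm
  · exact (letterAction_commute (x := .tau i) (y := .tau j) (Or.inr hfar)).eq.symm
  · exact letterAction_tau_braid hadj
  · exact letterAction_semivirtual hadj

def crossParHom (n : ℕ) : FGrp n →* (Equiv.Perm (Sym2 (Fin n) × ZMod 2))ᵐᵒᵖ :=
  PresentedGroup.toGroup fun _ => lift_generatorAction_of_mem_FRels

lemma crossParHom_evalF_apply {n : ℕ} (w : List (Letter n)) (e : Sym2 (Fin n)) (t : ZMod 2) :
    ((crossParHom n (evalF w)).unop (e, t)).2 = t + crossPar w e := by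
  induction w generalizing e t with
  | nil => simp [evalF, crossPar]
  | cons g w ih =>
    have hg : crossParHom n (evalF [g]) = MulOpposite.op (letterAction g) := by
      cases g <;> simp [evalF, zF, tF, crossParHom, generatorAction]
    rw [show evalF (g :: w) = evalF [g] * evalF w by simp [evalF], map_mul,
      MulOpposite.unop_mul, Equiv.Perm.mul_apply, hg, MulOpposite.unop_op, letterAction_apply,
      ih, crossPar_cons, add_assoc]

/-- the map counting, for each word `w` and each unordered pair `{a,b}`
of strands, the parity of the number of classical letters at which strands `a` and `b`
cross, descends to a well-defined function on `F_n` (it sends each `τ_i` to `0` and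
each `ζ_i` to the indicator of the pair of strands crossing there). -/
theorem crossing_parities_descend (n : ℕ) :
    ∃ f : FGrp n → (Sym2 (Fin n) → ZMod 2),
      ∀ w : List (Letter n), f (evalF w) = crossPar w :=
  ⟨fun x e => ((crossParHom n x).unop (e, 0)).2,
    fun w => funext fun e => (crossParHom_evalF_apply w e 0).trans (zero_add _)⟩

end OneTermBracket
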